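/- arXiv:2105.12908 — 10 statements merged into one kernel-verified Lean document; each statement's English description precedes it below -/
import Mathlib

section
/- If a directed graph G has a cycle, then for any vertex elimination ordering O, the vertex elimination graph G* of G according to O contains vertices v and v' with both edges (v,v') and (v',v) in G*. -/
/-- The vertex elimination sequence: `elimSeq E i` is the edge relation of the
graph `G_i` obtained from `G = G_0` by successively eliminating the vertices
`0, 1, ..., i-1` (the elimination ordering is the index order on `Fin n`).
Eliminating a vertex removes it and connects each of its in-neighbors to each
of its out-neighbors (no self-loops). -/
def elimSeq {n : ℕ} (E : Fin n → Fin n → Prop) : ℕ → Fin n → Fin n → Prop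
  | 0 => E
  | (i+1) => fun j k =>
      j.val ≠ i ∧ k.val ≠ i ∧
      (elimSeq E i j k ∨
        (j ≠ k ∧ ∃ m : Fin n, m.val = i ∧ elimSeq E i j m ∧ elimSeq E i m k))

/-- The vertex elimination graph `G*`: the union of all the `G_i`. -/
def estar {n : ℕ} (E : Fin n → Fin n → Prop) (j k : Fin n) : Prop :=
  ∃ i, elimSeq E i j k

/-- `tri E a b c` : the triangle recording that the edge `(a, c)` is created
while eliminating the (middle) vertex `b`. -/
def tri {n : ℕ} (E : Fin n → Fin n → Prop) (a b c : Fin n) : Prop :=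
  a ≠ c ∧ elimSeq E b.val a b ∧ elimSeq E b.val b c

/-- A directed graph is acyclic iff no vertex lies on a nonempty closed walk. -/
def Acyclic {n : ℕ} (E : Fin n → Fin n → Prop) : Prop :=
  ∀ v, ¬ Relation.TransGen E v v

/-- The graph `G_M` induced by a model `σ` via the edge variables `e`. -/
def modelGraph {n : ℕ} {Var : Type*} (E : Fin n → Fin n → Prop)
    (e : Fin n → Fin n → Var) (σ : Var → Prop) : Fin n → Fin n → Prop :=
  fun i j => E i j ∧ σ (e i j)

lemma elimSeq_le {n : ℕ} (E : Fin n → Fin n → Prop) :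
    ∀ m j k, elimSeq E m j k → m ≤ j.val ∧ m ≤ k.val := by
  intro m
  induction m with
  | zero => intro j k _; exact ⟨Nat.zero_le _, Nat.zero_le _⟩
  | succ i ih =>
    intro j k h
    obtain ⟨hj, hk, h⟩ := h
    rcases h with h | ⟨_, m', _, h1, h2⟩
    · exact ⟨Nat.lt_of_le_of_ne (ih _ _ h).1 (Ne.symm hj),
        Nat.lt_of_le_of_ne (ih _ _ h).2 (Ne.symm hk)⟩
    · exact ⟨Nat.lt_of_le_of_ne (ih _ _ h1).1 (Ne.symm hj),
        Nat.lt_of_le_of_ne (ih _ _ h2).2 (Ne.symm hk)⟩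

lemma elim_step {n : ℕ} (E : Fin n → Fin n → Prop) (i : ℕ)
    (hnp : ¬ ∃ a b, elimSeq E i a b ∧ elimSeq E i b a)
    (hv : ∃ v, Relation.TransGen (elimSeq E i) v v) :
    ∃ v, Relation.TransGen (elimSeq E (i+1)) v v := by
  have edge : ∀ j k : Fin n, j.val ≠ i → k.val ≠ i → elimSeq E i j k →
      elimSeq E (i+1) j k := fun j k h1 h2 h => ⟨h1, h2, Or.inl h⟩
  have comp : ∀ j k m : Fin n, j.val ≠ i → k.val ≠ i → j ≠ k → m.val = i →
      elimSeq E i j m → elimSeq E i m k → elimSeq E (i+1) j k :=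
    fun j k m h1 h2 h3 h4 h5 h6 => ⟨h1, h2, Or.inr ⟨h3, m, h4, h5, h6⟩⟩
  have claim : ∀ x : Fin n, x.val ≠ i → ∀ y, Relation.TransGen (elimSeq E i) x y →
      (y.val ≠ i → Relation.TransGen (elimSeq E (i+1)) x y) ∧
      (y.val = i → ∀ z : Fin n, z.val ≠ i → elimSeq E i y z →
        Relation.TransGen (elimSeq E (i+1)) x z) := by
    intro x hx y hxy
    induction hxy with
    | single h =>
      constructor
      · intro hy
        exact Relation.TransGen.single (edge _ _ hx hy h)
      · intro hy z hz hyz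
        by_cases hxz : x = z
        · exact absurd ⟨x, _, h, hxz ▸ hyz⟩ hnp
        · exact Relation.TransGen.single (comp _ _ _ hx hz hxz hy h hyz)
    | tail hxb hby ih =>
      rename_i b y
      by_cases hb : b.val = i
      · constructor
        · intro hy
          exact ih.2 hb y hy hby
        · intro hy
          have : b = y := Fin.ext (hb.trans hy.symm)
          exact absurd ⟨y, y, this ▸ hby, this ▸ hby⟩ hnp
      · have Tx := ih.1 hb
        constructor
        · intro hy
          exact Tx.tail (edge _ _ hb hy hby)
        · intro hy z hz hyz
          by_cases hbz : b = z
          · exact absurd ⟨b, y, hby, hbz ▸ hyz⟩ hnp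
          · exact Tx.tail (comp _ _ _ hb hz hbz hy hby hyz)
  obtain ⟨v, hv⟩ := hv
  by_cases hvi : v.val = i
  · obtain ⟨a, hva, hav⟩ := Relation.TransGen.head'_iff.mp hv
    by_cases ha : a.val = i
    · have : a = v := Fin.ext (ha.trans hvi.symm)
      exact absurd ⟨v, v, this ▸ hva, this ▸ hva⟩ hnp
    · rcases (Relation.reflTransGen_iff_eq_or_transGen.mp hav) with h | h
      · exact absurd (h ▸ hvi) ha
      · exact ⟨a, (claim a ha v h).2 hvi a ha hva⟩
  · exact ⟨v, (claim v hvi v hv).1 hvi⟩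

/-- if `G` has a cycle then, for any elimination ordering (here the
index order, with arbitrary graphs covering all orderings), the vertex
elimination graph contains a pair of opposite edges. -/
theorem stmt0 {n : ℕ} (E : Fin n → Fin n → Prop)
    (hcycle : ∃ v, Relation.TransGen E v v) :
    ∃ v v', estar E v v' ∧ estar E v' v := by
  by_contra hno
  have hnp : ∀ i, ¬ ∃ a b : Fin n, elimSeq E i a b ∧ elimSeq E i b a := by
    intro i ⟨a, b, h1, h2⟩
    exact hno ⟨a, b, ⟨i, h1⟩, ⟨i, h2⟩⟩
  have key : ∀ k, ∃ v, Relation.TransGen (elimSeq E k) v v := by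
    intro k
    induction k with
    | zero => exact hcycle
    | succ i ih => exact elim_step E i (hnp i) ih
  obtain ⟨v, hv⟩ := key n
  obtain ⟨b, hvb, _⟩ := Relation.TransGen.head'_iff.mp hv
  exact absurd (elimSeq_le E n v b hvb).1 (Nat.not_le.mpr v.isLt)
end

section
/- Soundness of the vertex elimination acyclicity encoding: if φ conjoined with the vertex elimination acyclicity constraints is satisfied by a model M, then the induced graph G_M is acyclic. -/
/-! Eliminate the vertices in order. A cycle in the stage-`i` graph, restricted to the edges
oriented by `e'`, can be rerouted around vertex `i`: a step `a → i → b` is replaced by the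
edge `a → b` created by the elimination, which `e'` orients the same way by transitivity over
the triangle `(a, i, b)`, while `a = b` would be a 2-cycle forbidden by asymmetry. So a cycle at
stage `i` yields one at stage `i + 1`, and at stage `n` no vertex is left. -/

theorem Relation.TransGen.bypass {α : Type*} {R R' : α → α → Prop} {x : α}
    (hloop : ¬ R x x)
    (hlift : ∀ a b, R a b → a ≠ x → b ≠ x → R' a b)
    (hshort : ∀ a b, R a x → R x b → a ≠ x → b ≠ x → R' a b)
    {a b : α} (hab : Relation.TransGen R a b) (hb : b ≠ x) :
    (a ≠ x → Relation.TransGen R' a b) ∧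
      (a = x → ∀ p, p ≠ x → R p a → Relation.TransGen R' p b) := by
  induction hab using Relation.TransGen.head_induction_on with
  | single hab =>
    exact ⟨fun ha => .single (hlift _ _ hab ha hb),
      fun ha p hp hpa => .single (hshort p _ (ha ▸ hpa) (ha ▸ hab) hp hb)⟩
  | @head a c hac _ ih =>
    by_cases hc : c = x
    · subst hc
      exact ⟨fun ha => ih.2 rfl a ha hac, fun ha => (hloop (ha ▸ hac)).elim⟩
    · exact ⟨fun ha => .head (hlift a c hac ha hc) (ih.1 hc),
        fun ha p hp hpa => .head (hshort p c (ha ▸ hpa) (ha ▸ hac) hp hc) (ih.1 hc)⟩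

theorem Acyclic.of_bypass {n : ℕ} {R R' : Fin n → Fin n → Prop} {x : Fin n} (hloop : ¬ R x x)
    (hlift : ∀ a b, R a b → a ≠ x → b ≠ x → R' a b)
    (hshort : ∀ a b, R a x → R x b → a ≠ x → b ≠ x → R' a b)
    (h : Acyclic R') : Acyclic R := by
  intro v hv
  by_cases hvx : v = x
  · subst hvx
    obtain ⟨w, hvw, hwv⟩ := Relation.TransGen.head'_iff.mp hv
    obtain hwv | hwv := Relation.reflTransGen_iff_eq_or_transGen.mp hwv
    · exact hloop (hwv ▸ hvw)
    have hw : w ≠ v := fun hw => hloop (hw ▸ hvw)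
    exact h w (((hwv.tail hvw).bypass hloop hlift hshort hw).1 hw)
  · exact h v ((hv.bypass hloop hlift hshort hvx).1 hvx)

theorem Acyclic.mono {n : ℕ} {R R' : Fin n → Fin n → Prop} (hRR' : ∀ a b, R a b → R' a b)
    (h : Acyclic R') : Acyclic R :=
  fun v hv => h v (Relation.TransGen.mono hRR' v v hv)

section Elimination

variable {n : ℕ} (E : Fin n → Fin n → Prop)

theorem elimSeq_val_ne_of_lt {i t : ℕ} (ht : t < i) {j k : Fin n} (h : elimSeq E i j k) :
    j.val ≠ t ∧ k.val ≠ t := by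
  induction i generalizing j k with
  | zero => omega
  | succ i ih =>
    obtain ⟨hj, hk, h | ⟨-, m, -, hjm, hmk⟩⟩ := h
    all_goals rcases Nat.lt_succ_iff_lt_or_eq.mp ht with ht | rfl
    · exact ih ht h
    · exact ⟨hj, hk⟩
    · exact ⟨(ih ht hjm).1, (ih ht hmk).2⟩
    · exact ⟨hj, hk⟩

theorem not_elimSeq_of_le {i : ℕ} (hi : n ≤ i) (j k : Fin n) : ¬ elimSeq E i j k :=
  fun h => (elimSeq_val_ne_of_lt E (t := j) (by omega) h).1 rfl

def orientedStage (e' : Fin n → Fin n → Prop) (i : ℕ) (j k : Fin n) : Prop :=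
  elimSeq E i j k ∧ e' j k

variable {E} {e' : Fin n → Fin n → Prop}
  (h2 : ∀ i j, estar E i j → estar E j i → e' i j → ¬ e' j i)
  (h3 : ∀ a b c, tri E a b c → e' a b → e' b c → e' a c)
include h2

theorem orientedStage_asymm {i : ℕ} {a b : Fin n} (hab : orientedStage E e' i a b) :
    ¬ orientedStage E e' i b a :=
  fun hba => h2 a b ⟨i, hab.1⟩ ⟨i, hba.1⟩ hab.2 hba.2

include h3

theorem Acyclic.orientedStage_of_succ (x : Fin n)
    (h : Acyclic (orientedStage E e' (x.val + 1))) : Acyclic (orientedStage E e' x.val) := by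
  refine Acyclic.of_bypass (x := x) (fun hxx => orientedStage_asymm h2 hxx hxx) ?_ ?_ h
  · exact fun a b hab ha hb => ⟨⟨Fin.val_ne_iff.mpr ha, Fin.val_ne_iff.mpr hb, .inl hab.1⟩, hab.2⟩
  · intro a b hax hxb ha hb
    have hab : a ≠ b := by
      rintro rfl
      exact orientedStage_asymm h2 hax hxb
    refine ⟨⟨Fin.val_ne_iff.mpr ha, Fin.val_ne_iff.mpr hb, .inr ⟨hab, x, rfl, hax.1, hxb.1⟩⟩, ?_⟩
    exact h3 a x b ⟨hab, hax.1, hxb.1⟩ hax.2 hxb.2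

theorem acyclic_orientedStage {i : ℕ} (hi : i ≤ n) : Acyclic (orientedStage E e' i) := by
  induction hi using Nat.decreasingInduction with
  | self =>
    intro v hv
    obtain ⟨w, hvw, -⟩ := Relation.TransGen.head'_iff.mp hv
    exact not_elimSeq_of_le E le_rfl v w hvw.1
  | of_succ k hk ih => exact Acyclic.orientedStage_of_succ h2 h3 ⟨k, hk⟩ ih

end Elimination

theorem stmt4_general {n : ℕ} {Var : Type*} (E : Fin n → Fin n → Prop)
    (e : Fin n → Fin n → Var)
    (σ : Var → Prop) (e' : Fin n → Fin n → Prop)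
    (h1 : ∀ i j, E i j → σ (e i j) → e' i j)
    (h2 : ∀ i j, estar E i j → estar E j i → e' i j → ¬ e' j i)
    (h3 : ∀ a b c, tri E a b c → e' a b → e' b c → e' a c) :
    Acyclic (modelGraph E e σ) :=
  (acyclic_orientedStage h2 h3 n.zero_le).mono fun a b ⟨hE, hσ⟩ => ⟨hE, h1 a b hE hσ⟩

/-- soundness of the vertex elimination acyclicity encoding. -/
theorem stmt4 {n : ℕ} {Var : Type*} (E : Fin n → Fin n → Prop)
    (φ : (Var → Prop) → Prop) (e : Fin n → Fin n → Var)
    (σ : Var → Prop) (e' : Fin n → Fin n → Prop)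
    (hφ : φ σ)
    (h1 : ∀ i j, E i j → σ (e i j) → e' i j)
    (h2 : ∀ i j, estar E i j → estar E j i → e' i j → ¬ e' j i)
    (h3 : ∀ a b c, tri E a b c → e' a b → e' b c → e' a c) :
    Acyclic (modelGraph E e σ) :=
  stmt4_general E e σ e' h1 h2 h3
end

section
/- If a model M satisfies φ together with the vertex elimination acyclicity constraints, then for every edge (v_i,v_j) in the vertex elimination graph of G_M (according to the same ordering O), M assigns e'_{i,j} true. -/
lemma elimSeq_mono {n : ℕ} {E1 E2 : Fin n → Fin n → Prop}
    (h : ∀ a b, E1 a b → E2 a b) :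
    ∀ i a b, elimSeq E1 i a b → elimSeq E2 i a b := by
  intro i
  induction i with
  | zero => exact h
  | succ i ih =>
    rintro a b ⟨ha, hb, hc | ⟨hne, m, hm, h1, h2⟩⟩
    · exact ⟨ha, hb, Or.inl (ih _ _ hc)⟩
    · exact ⟨ha, hb, Or.inr ⟨hne, m, hm, ih _ _ h1, ih _ _ h2⟩⟩

/-- every edge of the elimination graph of `G_M` (same ordering)
has its `e'` variable true in any model of the encoding. -/
theorem stmt5 {n : ℕ} {Var : Type*} (E : Fin n → Fin n → Prop)
    (φ : (Var → Prop) → Prop) (e : Fin n → Fin n → Var)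
    (σ : Var → Prop) (e' : Fin n → Fin n → Prop)
    (hφ : φ σ)
    (h1 : ∀ i j, E i j → σ (e i j) → e' i j)
    (h2 : ∀ i j, estar E i j → estar E j i → e' i j → ¬ e' j i)
    (h3 : ∀ a b c, tri E a b c → e' a b → e' b c → e' a c) :
    ∀ i j, estar (modelGraph E e σ) i j → e' i j := by
  intro i j ⟨k, hk⟩
  clear hφ h2
  induction k generalizing i j with
  | zero => exact h1 i j hk.1 hk.2
  | succ k ih =>
    obtain ⟨-, -, hc | ⟨hne, m, hm, hjm, hmk⟩⟩ := hk
    · exact ih _ _ hc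
    · have hmono : ∀ a b, modelGraph E e σ a b → E a b := fun a b h => h.1
      refine h3 i m j ⟨hne, ?_, ?_⟩ (ih _ _ hjm) (ih _ _ hmk)
      · rw [hm]; exact elimSeq_mono hmono _ _ _ hjm
      · rw [hm]; exact elimSeq_mono hmono _ _ _ hmk
end

section
/- Monotonicity of vertex elimination: if H is a subgraph of G on the same vertex set, then for any common elimination ordering O, the vertex elimination graph of H is a subgraph of the vertex elimination graph of G, and every triangle produced in eliminating H is a triangle produced in eliminating G. -/
lemma elimSeq_mono_s6 {n : ℕ} {H E : Fin n → Fin n → Prop}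
    (hsub : ∀ i j, H i j → E i j) :
    ∀ i j k, elimSeq H i j k → elimSeq E i j k := by
  intro i
  induction i with
  | zero => exact hsub
  | succ i ih =>
    rintro j k ⟨hj, hk, h | ⟨hjk, m, hm, h1, h2⟩⟩
    · exact ⟨hj, hk, Or.inl (ih _ _ h)⟩
    · exact ⟨hj, hk, Or.inr ⟨hjk, m, hm, ih _ _ h1, ih _ _ h2⟩⟩

/-- monotonicity of vertex elimination: if `H ⊆ G` then the
elimination graph of `H` is contained in that of `G`, and every triangle of
`H`'s elimination is a triangle of `G`'s elimination. -/
theorem stmt6 {n : ℕ} (H E : Fin n → Fin n → Prop)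
    (hsub : ∀ i j, H i j → E i j) :
    (∀ i j, estar H i j → estar E i j) ∧
    (∀ a b c, tri H a b c → tri E a b c) := by
  constructor
  · rintro i j ⟨m, h⟩
    exact ⟨m, elimSeq_mono_s6 hsub _ _ _ h⟩
  · rintro a b c ⟨hac, h1, h2⟩
    exact ⟨hac, elimSeq_mono_s6 hsub _ _ _ h1, elimSeq_mono_s6 hsub _ _ _ h2⟩
end

section
/- If t is reachable from s in a directed graph G, and O is an elimination ordering placing s and t after all other vertices, then the edge (s,t) belongs to the vertex elimination graph of G according to O. -/
/-!
Eliminating vertex `i` preserves reachability between the remaining vertices: a path through `i`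
is shortcut by the fill edge joining its neighbours on the path (or simply loses a closed detour
when those neighbours coincide). Since every vertex other than `s` and `t` is eliminated before
both of them, `t` is still reachable from `s` in the graph `G_m`, `m = min s t`. All vertices of
`G_m` lie in `{s, t}`, so a path from `s` to `t` there ends with the edge `(s, t)`.
-/

open Relation

theorem Relation.TransGen.rel_of_forall_rel_mem_pair {α : Type*} {r : α → α → Prop} {a b : α}
    (h : TransGen r a b) (hab : ∀ x y, r x y → y = a ∨ y = b) : r a b := by
  suffices ∀ c, TransGen r c b → c = a → r a b from this a h rfl
  intro c hc
  induction hc using TransGen.head_induction_on with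
  | single hcb => rintro rfl; exact hcb
  | head hcd _ ih =>
    rintro rfl
    rcases hab _ _ hcd with rfl | rfl
    · exact ih rfl
    · exact hcd

section Elimination

variable {n : ℕ} {E : Fin n → Fin n → Prop}

theorem le_val_of_elimSeq {i : ℕ} {j k : Fin n} (h : elimSeq E i j k) :
    i ≤ j.val ∧ i ≤ k.val := by
  induction i generalizing j k with
  | zero => simp
  | succ i ih =>
    obtain ⟨hj, hk, h | ⟨-, m, -, hjm, hmk⟩⟩ := h
    · have := ih h
      omega
    · have := (ih hjm).1
      have := (ih hmk).2
      omega

theorem reflTransGen_elimSeq_succ {i : ℕ} {a b : Fin n} (h : ReflTransGen (elimSeq E i) a b)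
    (ha : a.val ≠ i) (hb : b.val ≠ i) : ReflTransGen (elimSeq E (i + 1)) a b := by
  -- A path leaving the eliminated vertex `c` is continued from any in-neighbour `p` of `c`.
  suffices key : ∀ c, ReflTransGen (elimSeq E i) c b →
      (c.val ≠ i → ReflTransGen (elimSeq E (i + 1)) c b) ∧
      (c.val = i → ∀ p : Fin n, p.val ≠ i → elimSeq E i p c →
        ReflTransGen (elimSeq E (i + 1)) p b) from
    (key a h).1 ha
  intro c hc
  induction hc using ReflTransGen.head_induction_on with
  | refl => exact ⟨fun _ => .refl, fun hc => absurd hc hb⟩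
  | @head c d hcd _ ih =>
    by_cases hd : d.val = i
    · refine ⟨fun hc => ih.2 hd c hc hcd, fun hc p hp hpc => ih.2 hd p hp ?_⟩
      rwa [← Fin.ext (hc.trans hd.symm)]
    · refine ⟨fun hc => .head ⟨hc, hd, .inl hcd⟩ (ih.1 hd), fun hc p hp hpc => ?_⟩
      by_cases hpd : p = d
      · exact hpd ▸ ih.1 hd
      · exact .head ⟨hp, hd, .inr ⟨hpd, c, hc, hpc, hcd⟩⟩ (ih.1 hd)

theorem reflTransGen_elimSeq_of_le {k : ℕ} {a b : Fin n} (h : ReflTransGen E a b)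
    (ha : k ≤ a.val) (hb : k ≤ b.val) : ReflTransGen (elimSeq E k) a b := by
  induction k with
  | zero => exact h
  | succ k ih => exact reflTransGen_elimSeq_succ (ih (by omega) (by omega)) (by omega) (by omega)

end Elimination

/-- if `t` is reachable from `s` in `G` and the elimination
ordering places `s` and `t` after all other vertices, then `(s,t) ∈ E*`. -/
theorem stmt10 {n : ℕ} (E : Fin n → Fin n → Prop) (s t : Fin n) (hne : s ≠ t)
    (horder : ∀ v : Fin n, v ≠ s → v ≠ t → v.val < s.val ∧ v.val < t.val)
    (hreach : Relation.TransGen E s t) :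
    estar E s t := by
  set m := min s.val t.val
  have hreach_m : TransGen (elimSeq E m) s t :=
    (reflTransGen_iff_eq_or_transGen.1 (reflTransGen_elimSeq_of_le hreach.to_reflTransGen
      (min_le_left _ _) (min_le_right _ _))).resolve_left hne.symm
  refine ⟨m, hreach_m.rel_of_forall_rel_mem_pair fun x y hxy => ?_⟩
  by_contra! hy
  have hy_lt := horder y hy.1 hy.2
  have hm_le := (le_val_of_elimSeq hxy).2
  omega
end

section
/- In a vertex elimination graph, every vertex v_i that has a path (in the original graph G) to the last vertex v_{|V|} of the elimination ordering has, in the elimination graph, an out-edge to some vertex ordered later than itself: there exists j>i with (v_i,v_j)∈E*. -/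
/-!
Eliminating `0, …, s-1` turns every `E`-walk `a ⇝ b` between surviving vertices whose interior
vertices all lie below `s` into an edge of `G_s`: at the step eliminating `s`, split such a walk
at the first and the last visit of `s`. For the theorem, follow the path from `i` to the last
vertex, restarting whenever it returns to `i`; the first vertex `j > i` reached is joined to `i`
by a walk through vertices below `i`, hence `(i, j)` is an edge of `G_i`.
-/

section

variable {n : ℕ} (E : Fin n → Fin n → Prop)

def lowEdge (s : ℕ) (x y : Fin n) : Prop :=
  E x y ∧ y.val < s

/-- An `E`-walk from `a` to `b` whose interior vertices all have index `< s`. -/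
def WalkBelow (s : ℕ) (a b : Fin n) : Prop :=
  ∃ m, Relation.ReflTransGen (lowEdge E s) a m ∧ E m b

variable {E}

lemma WalkBelow.zero {a b : Fin n} (h : WalkBelow E 0 a b) : E a b := by
  obtain ⟨m, ham, hmb⟩ := h
  rcases ham.cases_tail with rfl | ⟨c, -, -, hm⟩
  · exact hmb
  · exact absurd hm (Nat.not_lt_zero _)

lemma reflTransGen_lowEdge_succ {s : ℕ} {a m : Fin n}
    (h : Relation.ReflTransGen (lowEdge E (s + 1)) a m) :
    Relation.ReflTransGen (lowEdge E s) a m ∨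
      ∃ v : Fin n, v.val = s ∧ WalkBelow E s a v ∧ Relation.ReflTransGen (lowEdge E s) v m := by
  induction h with
  | refl => exact .inl .refl
  | @tail c d _ hcd ih =>
    obtain ⟨hE, hd⟩ := hcd
    rcases Nat.lt_succ_iff_lt_or_eq.mp hd with hd | hd
    · exact ih.imp (·.tail ⟨hE, hd⟩) fun ⟨v, hv, hav, hvc⟩ => ⟨v, hv, hav, hvc.tail ⟨hE, hd⟩⟩
    · refine .inr ⟨d, hd, ?_, .refl⟩
      rcases ih with hac | ⟨v, hv, ⟨w, haw, hwv⟩, hvc⟩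
      · exact ⟨c, hac, hE⟩
      · -- `v` and `d` are the same vertex `s`: the loop `v ⇝ c → d` is cut out
        obtain rfl : v = d := Fin.ext (hv.trans hd.symm)
        exact ⟨w, haw, hwv⟩

lemma WalkBelow.succ {s : ℕ} {a b : Fin n} (h : WalkBelow E (s + 1) a b) :
    WalkBelow E s a b ∨ ∃ v : Fin n, v.val = s ∧ WalkBelow E s a v ∧ WalkBelow E s v b := by
  obtain ⟨m, ham, hmb⟩ := h
  exact (reflTransGen_lowEdge_succ ham).imp (fun ham => ⟨m, ham, hmb⟩)
    fun ⟨v, hv, hav, hvm⟩ => ⟨v, hv, hav, m, hvm, hmb⟩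

lemma elimSeq_of_walkBelow {s : ℕ} {a b : Fin n} (ha : s ≤ a.val) (hb : s ≤ b.val) (hab : a ≠ b)
    (h : WalkBelow E s a b) : elimSeq E s a b := by
  induction s generalizing a b with
  | zero => exact h.zero
  | succ s ih =>
    refine ⟨by omega, by omega, ?_⟩
    rcases h.succ with h | ⟨v, hv, hav, hvb⟩
    · exact .inl (ih (by omega) (by omega) hab h)
    · refine .inr ⟨hab, v, hv, ih (by omega) hv.ge ?_ hav, ih hv.ge (by omega) ?_ hvb⟩
      · rintro rfl; omega
      · rintro rfl; omega

lemma exists_walkBelow_or_reflTransGen_lowEdge {i c : Fin n} (h : Relation.ReflTransGen E i c) :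
    (∃ j, i < j ∧ WalkBelow E i.val i j) ∨ Relation.ReflTransGen (lowEdge E i.val) i c := by
  induction h with
  | refl => exact .inr .refl
  | @tail c d _ hcd ih =>
    refine ih.elim .inl fun hic => ?_
    rcases lt_trichotomy d i with hd | rfl | hd
    · exact .inr (hic.tail ⟨hcd, hd⟩)
    · exact .inr .refl
    · exact .inl ⟨d, hd, c, hic, hcd⟩

end

/-- every vertex `i` (other than the last vertex of the ordering)
with a path in `G` to the last vertex has, in the elimination graph, an
out-edge to some vertex ordered later than itself. -/
theorem stmt11 {n : ℕ} (E : Fin (n+1) → Fin (n+1) → Prop) (i : Fin (n+1))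
    (hi : i ≠ Fin.last n)
    (hpath : Relation.TransGen E i (Fin.last n)) :
    ∃ j : Fin (n+1), i < j ∧ estar E i j := by
  rcases exists_walkBelow_or_reflTransGen_lowEdge hpath.to_reflTransGen with ⟨j, hij, hwalk⟩ | hlow
  · exact ⟨j, hij, i.val, elimSeq_of_walkBelow le_rfl hij.le hij.ne hwalk⟩
  · rcases hlow.cases_tail with hlast | ⟨c, -, -, hlast⟩
    · exact absurd hlast.symm hi
    · exact absurd hlast (not_lt.mpr (Fin.le_last i))
end

section
/- Completeness of the vertex elimination s-t-eventual-reachability encoding: if φ is satisfied by a model M such that G_M has s-t-eventual-reachability, and t is ordered last by the elimination ordering O, then φ conjoined with the eventual-reachability encoding (reachability-marking clauses, elimination reachability clauses, and the progress clauses r_{s,i} → ⋁_{j>i,(v_i,v_j)∈E*} e'_{i,j}) is satisfiable. -/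
lemma elimSeq_mono_s13 {n : ℕ} {A B : Fin n → Fin n → Prop} (h : ∀ i j, A i j → B i j) :
    ∀ m i j, elimSeq A m i j → elimSeq B m i j := by
  intro m
  induction m with
  | zero => exact h
  | succ m ih =>
    rintro i j ⟨h1, h2, h3 | ⟨hne, k, hk, ha, hb⟩⟩
    · exact ⟨h1, h2, Or.inl (ih _ _ h3)⟩
    · exact ⟨h1, h2, Or.inr ⟨hne, k, hk, ih _ _ ha, ih _ _ hb⟩⟩

lemma elimSeq_ge {n : ℕ} {A : Fin n → Fin n → Prop} :
    ∀ m i j, elimSeq A m i j → m ≤ i.val ∧ m ≤ j.val := by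
  intro m
  induction m with
  | zero => intro i j _; omega
  | succ m ih =>
    rintro i j ⟨h1, h2, h3 | ⟨hne, k, hk, ha, hb⟩⟩
    · have := ih _ _ h3; omega
    · have h1' := ih _ _ ha; have h2' := ih _ _ hb; omega

lemma elimSeq_tri {n : ℕ} {A : Fin n → Fin n → Prop} :
    ∀ m i j, elimSeq A m i j → A i j ∨ ∃ k, tri A i k j := by
  intro m
  induction m with
  | zero => intro i j h; exact Or.inl h
  | succ m ih =>
    rintro i j ⟨h1, h2, h3 | ⟨hne, k, hk, ha, hb⟩⟩
    · exact ih _ _ h3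
    · refine Or.inr ⟨k, hne, ?_, ?_⟩ <;> rw [hk] <;> assumption

lemma skip_loop {α : Type*} {G : α → α → Prop} {v w : α} (hw : w ≠ v) :
    ∀ a, Relation.ReflTransGen G a w → a = v →
      ∃ y, y ≠ v ∧ G v y ∧ Relation.ReflTransGen G y w := by
  intro a h
  induction h using Relation.ReflTransGen.head_induction_on with
  | refl => intro h; exact absurd h hw
  | head hac hcw ih =>
    rename_i a c
    intro hav
    subst hav
    by_cases hc : c = a
    · exact ih hc
    · exact ⟨c, hc, hac, hcw⟩

lemma lift_path {n : ℕ} {A : Fin n → Fin n → Prop} {m : ℕ} {w : Fin n} (hw : w.val ≠ m) :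
    ∀ a, Relation.ReflTransGen (elimSeq A m) a w →
      (a.val ≠ m → Relation.ReflTransGen (elimSeq A (m+1)) a w) ∧
      (∀ b : Fin n, b.val ≠ m → elimSeq A m b a →
        Relation.ReflTransGen (elimSeq A (m+1)) b w) := by
  intro a h
  induction h using Relation.ReflTransGen.head_induction_on with
  | refl =>
    refine ⟨fun _ => Relation.ReflTransGen.refl, fun b hb hbw => ?_⟩
    exact Relation.ReflTransGen.single ⟨hb, hw, Or.inl hbw⟩
  | head hac hcw ih =>
    rename_i a c
    constructor
    · intro ha
      exact ih.2 a ha hac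
    · intro b hb hba
      by_cases ha : a.val = m
      · by_cases hc : c.val = m
        · have : a = c := Fin.ext (ha.trans hc.symm)
          exact ih.2 b hb (this ▸ hba)
        · by_cases hbc : b = c
          · subst hbc; exact ih.1 hc
          · refine Relation.ReflTransGen.head ⟨hb, hc, Or.inr ⟨hbc, a, ha, hba, hac⟩⟩ (ih.1 hc)
      · refine Relation.ReflTransGen.head ⟨hb, ha, Or.inl hba⟩ (ih.2 a ha hac)

lemma path_elim {n : ℕ} {A : Fin n → Fin n → Prop} {i w : Fin n}
    (h : Relation.ReflTransGen A i w) :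
    ∀ m, m ≤ i.val → m ≤ w.val → Relation.ReflTransGen (elimSeq A m) i w := by
  intro m
  induction m with
  | zero => intro _ _; exact h
  | succ m ih =>
    intro hi hwv
    exact (lift_path (by omega) i (ih (by omega) (by omega))).1 (by omega)

/-- completeness of the vertex elimination
s-t-eventual-reachability encoding, with `t` the last vertex of the ordering. -/
theorem stmt13 {n : ℕ} {Var : Type*} (E : Fin (n+1) → Fin (n+1) → Prop)
    (φ : (Var → Prop) → Prop) (e : Fin (n+1) → Fin (n+1) → Var)
    (s : Fin (n+1)) (σ : Var → Prop)
    (hφ : φ σ)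
    (hev : ∀ u, Relation.ReflTransGen (modelGraph E e σ) s u →
      Relation.ReflTransGen (modelGraph E e σ) u (Fin.last n)) :
    ∃ (σ' : Var → Prop) (e' : Fin (n+1) → Fin (n+1) → Prop)
      (t' : Fin (n+1) → Fin (n+1) → Fin (n+1) → Prop)
      (r : Fin (n+1) → Prop),
      φ σ' ∧
      r s ∧
      (∀ i j, E i j → σ' (e i j) → r i → r j) ∧
      (∀ i j, estar E i j → e' i j →
        ((E i j ∧ σ' (e i j)) ∨ ∃ k, tri E i k j ∧ t' i k j)) ∧
      (∀ i k j, tri E i k j → t' i k j → e' i k ∧ e' k j) ∧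
      (∀ i : Fin (n+1), i ≠ Fin.last n → r i →
        ∃ j, i < j ∧ estar E i j ∧ e' i j) := by
  classical
  set G := modelGraph E e σ with hG
  have hmono : ∀ i j, G i j → E i j := fun i j h => h.1
  refine ⟨σ, estar G, tri G, fun i => Relation.ReflTransGen G s i,
    hφ, Relation.ReflTransGen.refl, ?_, ?_, ?_, ?_⟩
  · intro i j hE hσ hr
    exact hr.tail ⟨hE, hσ⟩
  · rintro i j _ ⟨m, hm⟩
    rcases elimSeq_tri m i j hm with h | ⟨k, hk⟩
    · exact Or.inl h
    · exact Or.inr ⟨k, ⟨hk.1, elimSeq_mono_s13 hmono _ _ _ hk.2.1,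
        elimSeq_mono_s13 hmono _ _ _ hk.2.2⟩, hk⟩
  · rintro i k j _ ⟨hne, h1, h2⟩
    exact ⟨⟨k.val, h1⟩, ⟨k.val, h2⟩⟩
  · intro i hi hr
    have hpath := hev i hr
    have hival : i.val < n := by
      have h1 := i.isLt
      have h2 : i.val ≠ n := fun h => hi (Fin.ext (by simp [h, Fin.last]))
      omega
    have hp := path_elim hpath i.val le_rfl (by simp [Fin.last]; omega)
    have hlast : (Fin.last n) ≠ i := fun h => hi h.symm
    obtain ⟨y, hy, hedge, _⟩ := skip_loop hlast i hp rfl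
    have hge := elimSeq_ge i.val i y hedge
    have hij : i < y := by
      rcases lt_or_eq_of_le hge.2 with h | h
      · exact h
      · exact absurd (Fin.ext h.symm) hy
    exact ⟨y, hij, ⟨i.val, elimSeq_mono_s13 hmono _ _ _ hedge⟩, ⟨i.val, hedge⟩⟩
end

section
/- Soundness of the transitive-closure acyclicity encoding: if a model M satisfies the clauses e_{i,j}∧t_{j,k}→t_{i,k} for all (v_i,v_j)∈E and v_k∈V, together with e_{i,j}→t_{i,j} for all edges, and e_{i,j}→¬t_{j,i} for all (v_i,v_j)∈E, then the graph G_M induced by the true edge variables is acyclic. -/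
/-! The truth of `t i j` propagates backwards along the edges of `G_M`, so it holds along every
path of `G_M`; an edge `(i, j)` on a cycle would then give `t j i`, which the third family of
clauses forbids. -/

theorem Relation.transGen_le_of_le_of_head {α : Type*} {r t : α → α → Prop} (hr : r ≤ t)
    (hhead : ∀ a b c, r a b → t b c → t a c) : Relation.TransGen r ≤ t := by
  intro a b hab
  induction hab using Relation.TransGen.head_induction_on with
  | single hab => exact hr _ _ hab
  | head hab _ ih => exact hhead _ _ _ hab ih

theorem acyclic_of_transGen_le {n : ℕ} {r t : Fin n → Fin n → Prop}
    (hle : Relation.TransGen r ≤ t) (hnot : ∀ a b, r a b → ¬ t b a) : Acyclic r := by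
  intro v hcycle
  obtain ⟨b, hvb, hbv⟩ := Relation.TransGen.head'_iff.1 hcycle
  rcases Relation.reflTransGen_iff_eq_or_transGen.1 hbv with rfl | hbv
  · exact hnot _ _ hvb (hle _ _ (Relation.TransGen.single hvb))
  · exact hnot _ _ hvb (hle _ _ hbv)

/-- soundness of the transitive-closure acyclicity encoding. -/
theorem stmt16 {n : ℕ} {Var : Type*} (E : Fin n → Fin n → Prop)
    (e : Fin n → Fin n → Var) (σ : Var → Prop)
    (t' : Fin n → Fin n → Prop)
    (h1 : ∀ i j k, E i j → σ (e i j) → t' j k → t' i k)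
    (h2 : ∀ i j, E i j → σ (e i j) → t' i j)
    (h3 : ∀ i j, E i j → σ (e i j) → ¬ t' j i) :
    Acyclic (modelGraph E e σ) := by
  have hpath : Relation.TransGen (modelGraph E e σ) ≤ t' :=
    Relation.transGen_le_of_le_of_head (fun i j hij => h2 i j hij.1 hij.2)
      (fun i j k hij => h1 i j k hij.1 hij.2)
  exact acyclic_of_transGen_le hpath (fun i j hij => h3 i j hij.1 hij.2)
end

section
/- Soundness of the tree reduction acyclicity encoding: if a model M assigns to each vertex v_i a least level n with M(d_{i,n})=true, satisfies that every vertex has some true level (⋁_n d_{i,n}), that e_{i,j}→¬d_{i,0}, that d_{i,n}→d_{i,n+1}, and that d_{i,n}∧e_{i,j}→d_{j,n-1} for n≥1, then the graph G_M of true edge variables is acyclic. -/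
/-- soundness of the tree reduction acyclicity encoding: levels
range over `{0, ..., n-1}` (`n = |V|`), every vertex has a (least) true level,
sources of enabled edges cannot have level 0, levels are upward closed, and
levels decrease along enabled edges; then `G_M` is acyclic. -/
theorem stmt17 {n : ℕ} {Var : Type*} (E : Fin n → Fin n → Prop)
    (e : Fin n → Fin n → Var) (σ : Var → Prop)
    (d : Fin n → ℕ → Prop)
    (h1 : ∀ i, ∃ m, m < n ∧ d i m)
    (h2 : ∀ i j, E i j → σ (e i j) → ¬ d i 0)
    (h3 : ∀ (i : Fin n) (m : ℕ), m < n - 1 → d i m → d i (m+1))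
    (h4 : ∀ (i j : Fin n) (m : ℕ), E i j → 1 ≤ m → m ≤ n - 1 →
      d i m → σ (e i j) → d j (m-1)) :
    Acyclic (modelGraph E e σ) := by
  classical
  set L : Fin n → ℕ := fun i => Nat.find (h1 i) with hL
  have key : ∀ i j, modelGraph E e σ i j → L j < L i := by
    rintro i j ⟨hE, hσ⟩
    have hi1 : L i < n := (Nat.find_spec (h1 i)).1
    have hi2 : d i (L i) := (Nat.find_spec (h1 i)).2
    have hipos : 1 ≤ L i := by
      by_contra h
      have : L i = 0 := by omega
      exact h2 i j hE hσ (this ▸ hi2)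
    have hd : d j (L i - 1) := h4 i j (L i) hE hipos (by omega) hi2 hσ
    have : L j ≤ L i - 1 := Nat.find_le ⟨by omega, hd⟩
    omega
  intro v hv
  have : ∀ a b, Relation.TransGen (modelGraph E e σ) a b → L b < L a := by
    intro a b h
    induction h with
    | single h => exact key _ _ h
    | tail _ h ih => exact lt_trans (key _ _ h) ih
  exact lt_irrefl _ (this v v hv)
end

section
/- Soundness of the reachability-by-acyclicity encoding: suppose a model M satisfies the clauses e'_{i,j}→e_{i,j} and e'_{i,j}→r_{j,t} for all (v_i,v_j)∈E, r_{i,t}→⋁_{(v_i,v_j)∈E} e'_{i,j} for all v_i≠t, r_{t,t}, and r_{s,t}, and the subgraph G' of edges with e'_{i,j} true is acyclic; then t is reachable from s in the graph G_M of true e-variables. -/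
/-- soundness of the reachability-by-acyclicity encoding: the
acyclic subgraph `G'` of true `e'`-edges carries every `r`-marked vertex to
`t`, so `t` is reachable from `s` in `G_M`. -/
theorem stmt19 {n : ℕ} {Var : Type*} (E : Fin n → Fin n → Prop)
    (e : Fin n → Fin n → Var) (σ : Var → Prop)
    (s t : Fin n) (e' : Fin n → Fin n → Prop) (r : Fin n → Prop)
    (h1 : ∀ i j, E i j → e' i j → σ (e i j))
    (h2 : ∀ i j, E i j → e' i j → r j)
    (h3 : ∀ i : Fin n, i ≠ t → r i → ∃ j, E i j ∧ e' i j)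
    (h4 : r t) (h5 : r s)
    (hacy : Acyclic fun a b => E a b ∧ e' a b) :
    Relation.ReflTransGen (modelGraph E e σ) s t := by
  set R : Fin n → Fin n → Prop := fun a b => E a b ∧ e' a b with hR
  have hirr : ∀ v, ¬ Relation.TransGen (flip R) v v := by
    intro v hv
    exact hacy v (Relation.transGen_swap.mp hv)
  have htrans : Transitive (Relation.TransGen (flip R)) :=
    fun _ _ _ h h' => h.trans h'
  have hwf : WellFounded (Relation.TransGen (flip R)) :=
    @Finite.wellFounded_of_trans_of_irrefl _ _ _ ⟨htrans⟩ ⟨hirr⟩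
  have hwf2 : WellFounded (flip R) :=
    Subrelation.wf (fun h => Relation.TransGen.single h) hwf
  have key : ∀ i, r i → Relation.ReflTransGen (modelGraph E e σ) i t := by
    intro i
    induction i using hwf2.induction with
    | _ i ih =>
      intro hri
      by_cases hit : i = t
      · subst hit; exact Relation.ReflTransGen.refl
      · obtain ⟨j, hEij, he'⟩ := h3 i hit hri
        have : Relation.ReflTransGen (modelGraph E e σ) j t :=
          ih j ⟨hEij, he'⟩ (h2 i j hEij he')
        exact Relation.ReflTransGen.head ⟨hEij, h1 i j hEij he'⟩ this
  exact key s h5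
end
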